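/- If H(S_l | F, S_{l+k}, P) = 0 and H(S_l | X_{1:l+k}) < ε for some ε > 0 (where the word X_{1:l+k} is a function of F), then the discarded cryptic information satisfies I(P ; S_l | F, S_{l+k}) < ε. -/
import Mathlib


open scoped Classical

noncomputable section

variable {Ω : Type*} [Fintype Ω]

/-- Probability of an event under a pmf `p` on a finite sample space. -/
def prob (p : Ω → ℝ) (E : Ω → Prop) : ℝ := ∑ ω, if E ω then p ω else 0

/-- `p` is a probability mass function. -/
structure IsPMF (p : Ω → ℝ) : Prop where
  nonneg : ∀ ω, 0 ≤ p ω
  sum_one : ∑ ω, p ω = 1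

/-- Shannon entropy of the random variable `X`. -/
def H {α : Type*} [Fintype α] (p : Ω → ℝ) (X : Ω → α) : ℝ :=
  - ∑ a : α, prob p (fun ω => X ω = a) * Real.log (prob p (fun ω => X ω = a))

/-- Joint Shannon entropy of `X` and `Y`. -/
def H2 {α β : Type*} [Fintype α] [Fintype β] (p : Ω → ℝ) (X : Ω → α) (Y : Ω → β) : ℝ :=
  H p (fun ω => (X ω, Y ω))

/-- Conditional Shannon entropy `H(X | Y)`. -/
def condH {α β : Type*} [Fintype α] [Fintype β] (p : Ω → ℝ) (X : Ω → α) (Y : Ω → β) : ℝ :=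
  H2 p X Y - H p Y

/-- Mutual information `I(X ; Y)`. -/
def mutInfo {α β : Type*} [Fintype α] [Fintype β] (p : Ω → ℝ) (X : Ω → α) (Y : Ω → β) : ℝ :=
  H p X + H p Y - H2 p X Y

/-- Conditional mutual information `I(X ; Y | W)`. -/
def cmi {α β γ : Type*} [Fintype α] [Fintype β] [Fintype γ]
    (p : Ω → ℝ) (X : Ω → α) (Y : Ω → β) (W : Ω → γ) : ℝ :=
  condH p X W - condH p X (fun ω => (W ω, Y ω))

/-- Trivariate conditional mutual information `I(X ; Y ; Z | W)`. -/
def tri {α β γ δ : Type*} [Fintype α] [Fintype β] [Fintype γ] [Fintype δ]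
    (p : Ω → ℝ) (X : Ω → α) (Y : Ω → β) (Z : Ω → γ) (W : Ω → δ) : ℝ :=
  cmi p X Y W - cmi p X Y (fun ω => (Z ω, W ω))

/-- `X → Y → Z` is a Markov chain: `X` and `Z` are conditionally independent given `Y`. -/
def MarkovChain {α β γ : Type*} (p : Ω → ℝ) (X : Ω → α) (Y : Ω → β) (Z : Ω → γ) : Prop :=
  ∀ x y z,
    prob p (fun ω => X ω = x ∧ Y ω = y ∧ Z ω = z) * prob p (fun ω => Y ω = y) =
    prob p (fun ω => X ω = x ∧ Y ω = y) * prob p (fun ω => Y ω = y ∧ Z ω = z)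

-- aux lemmas
lemma prob_nonneg (p : Ω → ℝ) (hp : IsPMF p) (E : Ω → Prop) : 0 ≤ prob p E := by
  apply Finset.sum_nonneg; intro ω _
  split
  · exact hp.nonneg ω
  · exact le_rfl

lemma prob_congr (p : Ω → ℝ) {E E' : Ω → Prop} (h : ∀ ω, E ω ↔ E' ω) :
    prob p E = prob p E' := by
  unfold prob; exact Finset.sum_congr rfl (fun ω _ => by rw [if_congr (h ω) rfl rfl])

lemma prob_marginal {α β : Type*} [Fintype α] [Fintype β] (p : Ω → ℝ)
    (X : Ω → α) (W : Ω → β) (w : β) :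
    prob p (fun ω => W ω = w) = ∑ x, prob p (fun ω => X ω = x ∧ W ω = w) := by
  unfold prob
  rw [Finset.sum_comm]
  refine Finset.sum_congr rfl (fun ω _ => ?_)
  rw [eq_comm]
  beta_reduce
  by_cases h2 : W ω = w
  · simp [h2, Finset.sum_ite_eq]
  · simp [h2]

lemma sum_prob_eq_one {β : Type*} [Fintype β] (p : Ω → ℝ) (hp : IsPMF p) (W : Ω → β) :
    ∑ w, prob p (fun ω => W ω = w) = 1 := by
  unfold prob
  rw [Finset.sum_comm]
  rw [← hp.sum_one]
  refine Finset.sum_congr rfl (fun ω _ => ?_)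
  simp [Finset.sum_ite_eq]

lemma prob_pair {α β : Type*} [Fintype α] [Fintype β] (p : Ω → ℝ)
    (X : Ω → α) (W : Ω → β) (x : α) (w : β) :
    prob p (fun ω => (X ω, W ω) = (x, w)) = prob p (fun ω => X ω = x ∧ W ω = w) :=
  prob_congr p (fun ω => by simp [Prod.ext_iff])

lemma H2_eq {α β : Type*} [Fintype α] [Fintype β] (p : Ω → ℝ) (X : Ω → α) (W : Ω → β) :
    H2 p X W = - ∑ x, ∑ w, prob p (fun ω => X ω = x ∧ W ω = w) *
      Real.log (prob p (fun ω => X ω = x ∧ W ω = w)) := by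
  unfold H2 H
  beta_reduce
  congr 1
  rw [Fintype.sum_prod_type]
  exact Finset.sum_congr rfl fun x _ => Finset.sum_congr rfl fun w _ => by
    rw [prob_pair]

lemma condH_eq {α β : Type*} [Fintype α] [Fintype β] (p : Ω → ℝ) (X : Ω → α) (W : Ω → β) :
    condH p X W = ∑ x, ∑ w, prob p (fun ω => X ω = x ∧ W ω = w) *
      (Real.log (prob p (fun ω => W ω = w)) -
       Real.log (prob p (fun ω => X ω = x ∧ W ω = w))) := by
  unfold condH
  rw [H2_eq]
  unfold H
  have h1 : ∀ w : β, prob p (fun ω => W ω = w) * Real.log (prob p (fun ω => W ω = w)) =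
      ∑ x, prob p (fun ω => X ω = x ∧ W ω = w) * Real.log (prob p (fun ω => W ω = w)) := by
    intro w
    rw [prob_marginal p X W w, Finset.sum_mul]
  calc (- ∑ x, ∑ w, prob p (fun ω => X ω = x ∧ W ω = w) *
          Real.log (prob p (fun ω => X ω = x ∧ W ω = w))) -
        (- ∑ w, prob p (fun ω => W ω = w) * Real.log (prob p (fun ω => W ω = w)))
      = (∑ w, ∑ x, prob p (fun ω => X ω = x ∧ W ω = w) *
          Real.log (prob p (fun ω => W ω = w))) -
        ∑ x, ∑ w, prob p (fun ω => X ω = x ∧ W ω = w) *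
          Real.log (prob p (fun ω => X ω = x ∧ W ω = w)) := by
        rw [← Finset.sum_congr rfl (fun w _ => h1 w)]; ring
    _ = ∑ x, ∑ w, prob p (fun ω => X ω = x ∧ W ω = w) *
          (Real.log (prob p (fun ω => W ω = w)) -
           Real.log (prob p (fun ω => X ω = x ∧ W ω = w))) := by
        rw [Finset.sum_comm, ← Finset.sum_sub_distrib]
        exact Finset.sum_congr rfl fun x _ => by
          rw [← Finset.sum_sub_distrib]
          exact Finset.sum_congr rfl fun w _ => by ring

lemma H_relabel {α β : Type*} [Fintype α] [Fintype β] (p : Ω → ℝ)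
    (X : Ω → α) (Y : Ω → β) (e : α ≃ β) (h : ∀ ω, Y ω = e (X ω)) :
    H p Y = H p X := by
  unfold H
  congr 1
  rw [← Equiv.sum_comp e
    (fun b => prob p (fun ω => Y ω = b) * Real.log (prob p (fun ω => Y ω = b)))]
  refine Finset.sum_congr rfl fun a _ => ?_
  have : prob p (fun ω => Y ω = e a) = prob p (fun ω => X ω = a) :=
    prob_congr p (fun ω => by rw [h ω]; exact e.apply_eq_iff_eq)
  rw [this]

lemma gibbs_term {r rW s sZ : ℝ} (h_r : 0 ≤ r) (h_rrW : r ≤ rW) (h_rs : r ≤ s)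
    (h_rWsZ : rW ≤ sZ) :
    r * (Real.log rW - Real.log r - (Real.log sZ - Real.log s)) ≤ rW * s / sZ - r := by
  rcases eq_or_lt_of_le h_r with h0 | hrpos
  · rw [← h0]
    have hrW : (0:ℝ) ≤ rW := h0 ▸ h_rrW
    have hs : (0:ℝ) ≤ s := h0 ▸ h_rs
    have hsZ : (0:ℝ) ≤ sZ := le_trans hrW h_rWsZ
    simpa using div_nonneg (mul_nonneg hrW hs) hsZ
  · have hrW : 0 < rW := lt_of_lt_of_le hrpos h_rrW
    have hs : 0 < s := lt_of_lt_of_le hrpos h_rs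
    have hsZ : 0 < sZ := lt_of_lt_of_le hrW h_rWsZ
    have hA : 0 < rW * s / (r * sZ) := by positivity
    have hlog : Real.log rW - Real.log r - (Real.log sZ - Real.log s) =
        Real.log (rW * s / (r * sZ)) := by
      rw [Real.log_div (by positivity) (by positivity), Real.log_mul hrW.ne' hs.ne',
        Real.log_mul hrpos.ne' hsZ.ne']
      ring
    rw [hlog]
    calc r * Real.log (rW * s / (r * sZ))
        ≤ r * (rW * s / (r * sZ) - 1) :=
          mul_le_mul_of_nonneg_left (Real.log_le_sub_one_of_pos hA) hrpos.le
      _ = rW * s / sZ - r := by field_simp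

lemma sum_gibbs {α β χ : Type*} [Fintype α] [Fintype β] [Fintype χ]
    (r : α → β → ℝ) (f : β → χ)
    (hr0 : ∀ x w, 0 ≤ r x w)
    (hsum : ∑ w, ∑ x, r x w = 1) :
    ∑ x, ∑ w, r x w * (Real.log (∑ x', r x' w) - Real.log (r x w)) ≤
    ∑ x, ∑ z, (∑ w ∈ Finset.univ.filter (fun w => f w = z), r x w) *
      (Real.log (∑ x', ∑ w ∈ Finset.univ.filter (fun w => f w = z), r x' w) -
       Real.log (∑ w ∈ Finset.univ.filter (fun w => f w = z), r x w)) := by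
  classical
  set rW : β → ℝ := fun w => ∑ x', r x' w with hrW
  set s : α → χ → ℝ := fun x z => ∑ w ∈ Finset.univ.filter (fun w => f w = z), r x w with hs
  set sZ : χ → ℝ := fun z => ∑ x', s x' z with hsZ
  show ∑ x, ∑ w, r x w * (Real.log (rW w) - Real.log (r x w)) ≤
    ∑ x, ∑ z, s x z * (Real.log (sZ z) - Real.log (s x z))
  have hrW0 : ∀ w, 0 ≤ rW w := fun w => Finset.sum_nonneg fun x _ => hr0 x w
  have hs0 : ∀ x z, 0 ≤ s x z := fun x z => Finset.sum_nonneg fun w _ => hr0 x w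
  have hmemfib : ∀ w : β, w ∈ Finset.univ.filter (fun w' => f w' = f w) := by
    intro w; simp
  have h_r_rW : ∀ x w, r x w ≤ rW w := fun x w =>
    Finset.single_le_sum (fun x' _ => hr0 x' w) (Finset.mem_univ x)
  have h_r_s : ∀ x w, r x w ≤ s x (f w) := fun x w =>
    Finset.single_le_sum (fun w' _ => hr0 x w') (hmemfib w)
  have h_rW_sZ : ∀ w, rW w ≤ sZ (f w) := by
    intro w
    refine Finset.sum_le_sum fun x _ => ?_
    exact Finset.single_le_sum (fun w' _ => hr0 x w') (hmemfib w)
  have hsum' : ∑ w, rW w = 1 := hsum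
  have hRHS : ∀ x : α, (∑ z, s x z * (Real.log (sZ z) - Real.log (s x z))) =
      ∑ w, r x w * (Real.log (sZ (f w)) - Real.log (s x (f w))) := by
    intro x
    rw [← Finset.sum_fiberwise Finset.univ f
      (fun w => r x w * (Real.log (sZ (f w)) - Real.log (s x (f w))))]
    refine Finset.sum_congr rfl fun z _ => ?_
    rw [hs, Finset.sum_mul]
    refine Finset.sum_congr rfl fun w hw => ?_
    have hfw : f w = z := (Finset.mem_filter.mp hw).2
    rw [hfw]
  have key : ∑ x, ∑ w, (r x w * (Real.log (rW w) - Real.log (r x w)) -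
      r x w * (Real.log (sZ (f w)) - Real.log (s x (f w)))) ≤ 0 := by
    have hterm : ∀ x w, r x w * (Real.log (rW w) - Real.log (r x w)) -
        r x w * (Real.log (sZ (f w)) - Real.log (s x (f w))) ≤
        rW w * s x (f w) / sZ (f w) - r x w := by
      intro x w
      have := gibbs_term (hr0 x w) (h_r_rW x w) (h_r_s x w) (h_rW_sZ w)
      nlinarith [this]
    have hw1 : ∀ w, ∑ x, rW w * s x (f w) / sZ (f w) ≤ rW w := by
      intro w
      have : ∑ x, rW w * s x (f w) / sZ (f w) = rW w / sZ (f w) * sZ (f w) := by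
        rw [hsZ]
        beta_reduce
        rw [Finset.mul_sum]
        exact Finset.sum_congr rfl fun x _ => by ring
      rw [this]
      by_cases hz : sZ (f w) = 0
      · rw [hz]; simpa using hrW0 w
      · rw [div_mul_cancel₀ _ hz]
    calc ∑ x, ∑ w, (r x w * (Real.log (rW w) - Real.log (r x w)) -
          r x w * (Real.log (sZ (f w)) - Real.log (s x (f w))))
        ≤ ∑ x, ∑ w, (rW w * s x (f w) / sZ (f w) - r x w) :=
          Finset.sum_le_sum fun x _ => Finset.sum_le_sum fun w _ => hterm x w
      _ = (∑ w, ∑ x, rW w * s x (f w) / sZ (f w)) - ∑ w, rW w := by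
          rw [Finset.sum_comm]
          rw [← Finset.sum_sub_distrib]
          refine Finset.sum_congr rfl fun w _ => ?_
          rw [← Finset.sum_sub_distrib]
      _ ≤ (∑ w, rW w) - ∑ w, rW w :=
          sub_le_sub_right (Finset.sum_le_sum fun w _ => hw1 w) _
      _ = 0 := by ring
  have hsplit : ∑ x, ∑ w, (r x w * (Real.log (rW w) - Real.log (r x w)) -
      r x w * (Real.log (sZ (f w)) - Real.log (s x (f w)))) =
      (∑ x, ∑ w, r x w * (Real.log (rW w) - Real.log (r x w))) -
      ∑ x, ∑ w, r x w * (Real.log (sZ (f w)) - Real.log (s x (f w))) := by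
    rw [← Finset.sum_sub_distrib]
    exact Finset.sum_congr rfl fun x _ => by rw [← Finset.sum_sub_distrib]
  have h2 : ∑ x, ∑ w, r x w * (Real.log (rW w) - Real.log (r x w)) ≤
      ∑ x, ∑ w, r x w * (Real.log (sZ (f w)) - Real.log (s x (f w))) := by
    rw [hsplit] at key; linarith
  calc ∑ x, ∑ w, r x w * (Real.log (rW w) - Real.log (r x w))
      ≤ ∑ x, ∑ w, r x w * (Real.log (sZ (f w)) - Real.log (s x (f w))) := h2
    _ = ∑ x, ∑ z, s x z * (Real.log (sZ z) - Real.log (s x z)) :=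
        (Finset.sum_congr rfl fun x _ => (hRHS x).symm)

lemma prob_fiber {α β χ : Type*} [Fintype α] [Fintype β] [Fintype χ] (p : Ω → ℝ)
    (X : Ω → α) (W : Ω → β) (f : β → χ) (x : α) (z : χ) :
    prob p (fun ω => X ω = x ∧ f (W ω) = z) =
    ∑ w ∈ Finset.univ.filter (fun w => f w = z), prob p (fun ω => X ω = x ∧ W ω = w) := by
  classical
  unfold prob
  rw [Finset.sum_comm]
  refine Finset.sum_congr rfl fun ω _ => ?_
  beta_reduce
  by_cases hx : X ω = x
  · simp only [hx, true_and]
    rw [Finset.sum_ite_eq]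
    simp [Finset.mem_filter]
  · simp [hx]

lemma condH_comp_le {α β χ : Type*} [Fintype α] [Fintype β] [Fintype χ]
    (p : Ω → ℝ) (hp : IsPMF p) (X : Ω → α) (W : Ω → β) (Z : Ω → χ) (f : β → χ)
    (hZ : ∀ ω, Z ω = f (W ω)) :
    condH p X W ≤ condH p X Z := by
  classical
  rw [condH_eq p X W, condH_eq p X Z]
  have hA : ∀ x z, prob p (fun ω => X ω = x ∧ Z ω = z) =
      ∑ w ∈ Finset.univ.filter (fun w => f w = z), prob p (fun ω => X ω = x ∧ W ω = w) := by
    intro x z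
    rw [prob_congr p (fun ω => by rw [hZ ω] :
      ∀ ω, (X ω = x ∧ Z ω = z) ↔ (X ω = x ∧ f (W ω) = z))]
    exact prob_fiber p X W f x z
  have hB : ∀ z, prob p (fun ω => Z ω = z) =
      ∑ x, ∑ w ∈ Finset.univ.filter (fun w => f w = z), prob p (fun ω => X ω = x ∧ W ω = w) := by
    intro z
    rw [prob_marginal p X Z z]
    exact Finset.sum_congr rfl fun x _ => hA x z
  have hW : ∀ w, prob p (fun ω => W ω = w) = ∑ x, prob p (fun ω => X ω = x ∧ W ω = w) :=
    fun w => prob_marginal p X W w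
  calc ∑ x, ∑ w, prob p (fun ω => X ω = x ∧ W ω = w) *
        (Real.log (prob p (fun ω => W ω = w)) -
         Real.log (prob p (fun ω => X ω = x ∧ W ω = w)))
      = ∑ x, ∑ w, prob p (fun ω => X ω = x ∧ W ω = w) *
        (Real.log (∑ x', prob p (fun ω => X ω = x' ∧ W ω = w)) -
         Real.log (prob p (fun ω => X ω = x ∧ W ω = w))) := by
        refine Finset.sum_congr rfl fun x _ => Finset.sum_congr rfl fun w _ => ?_
        rw [hW w]
    _ ≤ ∑ x, ∑ z, (∑ w ∈ Finset.univ.filter (fun w => f w = z),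
          prob p (fun ω => X ω = x ∧ W ω = w)) *
        (Real.log (∑ x', ∑ w ∈ Finset.univ.filter (fun w => f w = z),
          prob p (fun ω => X ω = x' ∧ W ω = w)) -
         Real.log (∑ w ∈ Finset.univ.filter (fun w => f w = z),
          prob p (fun ω => X ω = x ∧ W ω = w))) := by
        refine sum_gibbs (fun x w => prob p (fun ω => X ω = x ∧ W ω = w)) f
          (fun x w => prob_nonneg p hp _) ?_
        rw [Finset.sum_congr rfl fun w _ => (hW w).symm]
        exact sum_prob_eq_one p hp W
    _ = ∑ x, ∑ z, prob p (fun ω => X ω = x ∧ Z ω = z) *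
        (Real.log (prob p (fun ω => Z ω = z)) -
         Real.log (prob p (fun ω => X ω = x ∧ Z ω = z))) := by
        refine Finset.sum_congr rfl fun x _ => Finset.sum_congr rfl fun z _ => ?_
        rw [hA x z, hB z]

lemma cmi_symm_eq {α β γ δ : Type*} [Fintype α] [Fintype β] [Fintype γ] [Fintype δ]
    (p : Ω → ℝ) (P : Ω → α) (Sl : Ω → β) (F : Ω → γ) (Slk : Ω → δ) :
    cmi p P Sl (fun ω => (F ω, Slk ω)) =
      condH p Sl (fun ω => (F ω, Slk ω)) - condH p Sl (fun ω => (P ω, F ω, Slk ω)) := by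
  have hswap : H p (fun ω => ((F ω, Slk ω), Sl ω)) = H p (fun ω => (Sl ω, (F ω, Slk ω))) :=
    H_relabel p (fun ω => (Sl ω, (F ω, Slk ω))) (fun ω => ((F ω, Slk ω), Sl ω))
      (Equiv.prodComm _ _) (fun ω => rfl)
  have hbig : H p (fun ω => (P ω, ((F ω, Slk ω), Sl ω))) =
      H p (fun ω => (Sl ω, (P ω, F ω, Slk ω))) :=
    H_relabel p (fun ω => (Sl ω, (P ω, F ω, Slk ω)))
      (fun ω => (P ω, ((F ω, Slk ω), Sl ω)))
      ⟨fun q => (q.2.1, ((q.2.2.1, q.2.2.2), q.1)),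
       fun q => (q.2.2, (q.1, (q.2.1.1, q.2.1.2))),
       fun q => rfl, fun q => rfl⟩ (fun ω => rfl)
  unfold cmi condH H2
  beta_reduce
  linarith [hswap, hbig]


/-- Lemma 9: if `H(S_l | P, F, S_{l+k}) = 0` and `H(S_l | X_{1:l+k}) < ε`
where the word `X_{1:l+k}` is a function of `F`, then the discarded cryptic information
satisfies `I(P ; S_l | F, S_{l+k}) < ε`. -/
theorem dissipation_lt_eps
    {α β γ δ χ : Type*} [Fintype α] [Fintype β] [Fintype γ] [Fintype δ] [Fintype χ]
    (p : Ω → ℝ) (hp : IsPMF p) (P : Ω → α) (Sl : Ω → β) (F : Ω → γ) (Slk : Ω → δ)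
    (Xw : Ω → χ) (g : γ → χ) (hXw : ∀ ω, Xw ω = g (F ω))
    (ε : ℝ) (hε : 0 < ε)
    (hsync : condH p Sl (fun ω => (P ω, F ω, Slk ω)) = 0)
    (hword : condH p Sl Xw < ε) :
    cmi p P Sl (fun ω => (F ω, Slk ω)) < ε := by
  rw [cmi_symm_eq p P Sl F Slk, hsync, sub_zero]
  have hle : condH p Sl (fun ω => (F ω, Slk ω)) ≤ condH p Sl Xw :=
    condH_comp_le p hp Sl (fun ω => (F ω, Slk ω)) Xw (fun q => g q.1)
      (fun ω => by rw [hXw ω])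
  linarith
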